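/- Let 𝒜 ⊂ ℝ^d be finite, 𝒮 a polyhedral subdivision of 𝒜, w, w_i ∈ ℝ^𝒜_{>0} with X_{ℱ,w_i} → X_{ℱ,w} (Hausdorff) for every face ℱ of 𝒮. If y ∈ ▵^ℱ for some face ℱ of 𝒮 is an accumulation point of the sequence of sets {X_{𝒜,w_i}}, then y ∈ X_{ℱ,w} ⊆ X(𝒮,w). -/

import Mathlib

open Finset Filter

def IsPolySubdiv (d : ℕ) (A : Finset (Fin d → ℝ)) (S : Finset (Finset (Fin d → ℝ))) :
    Prop :=
  (∀ F ∈ S, F ⊆ A) ∧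
  (convexHull ℝ (A : Set (Fin d → ℝ)) = ⋃ F ∈ S, convexHull ℝ (F : Set (Fin d → ℝ))) ∧
  (∀ F ∈ S, ∀ G ∈ S, F ∩ G ∈ S ∧
    convexHull ℝ ((F ∩ G : Finset (Fin d → ℝ)) : Set (Fin d → ℝ)) =
      convexHull ℝ (F : Set (Fin d → ℝ)) ∩ convexHull ℝ (G : Set (Fin d → ℝ))) ∧
  (∀ F ∈ S, ∀ (c : Fin d → ℝ) (b : ℝ),
    (∀ x ∈ F, (∑ j, c j * x j) ≤ b) → F.filter (fun x => (∑ j, c j * x j) = b) ∈ S)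

noncomputable def toricMonomial (d : ℕ) (A : Finset (Fin d → ℝ)) (x : Fin d → ℝ) :
    ↥A → ℝ := fun a => ∏ j, (x j) ^ ((a : Fin d → ℝ) j)

noncomputable def simplexNormalize (d : ℕ) (A : Finset (Fin d → ℝ)) (z : ↥A → ℝ) :
    ↥A → ℝ := fun a => z a / ∑ b : ↥A, z b

noncomputable def toricVariety (d : ℕ) (A : Finset (Fin d → ℝ)) : Set (↥A → ℝ) :=
  closure {z | ∃ x : Fin d → ℝ, (∀ j, 0 < x j) ∧
    z = simplexNormalize d A (toricMonomial d A x)}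

noncomputable def subMonomial (d : ℕ) (A F : Finset (Fin d → ℝ)) (x : Fin d → ℝ) :
    ↥A → ℝ := fun a =>
  if (a : Fin d → ℝ) ∈ F then ∏ j, (x j) ^ ((a : Fin d → ℝ) j) else 0

noncomputable def toricSubVariety (d : ℕ) (A F : Finset (Fin d → ℝ)) : Set (↥A → ℝ) :=
  closure {z | ∃ x : Fin d → ℝ, (∀ j, 0 < x j) ∧
    z = simplexNormalize d A (subMonomial d A F x)}

noncomputable def torusAct (d : ℕ) (A : Finset (Fin d → ℝ)) (w z : ↥A → ℝ) :
    ↥A → ℝ := simplexNormalize d A (fun a => w a * z a)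

noncomputable def l1dist (d : ℕ) (A : Finset (Fin d → ℝ)) (y z : ↥A → ℝ) : ℝ :=
  ∑ a : ↥A, |y a - z a|

def HausdorffTendsto (d : ℕ) (A : Finset (Fin d → ℝ)) (X : ℕ → Set (↥A → ℝ))
    (Y : Set (↥A → ℝ)) : Prop :=
  ∀ ε > (0 : ℝ), ∀ᶠ i in atTop,
    (∀ z ∈ X i, ∃ y ∈ Y, l1dist d A z y < ε) ∧
    (∀ y ∈ Y, ∃ z ∈ X i, l1dist d A z y < ε)

/-- The face `▵^ℱ` of the standard simplex `▵^𝒜` supported on `ℱ`. -/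
def simplexFace (d : ℕ) (A F : Finset (Fin d → ℝ)) : Set (↥A → ℝ) :=
  {z | z ∈ stdSimplex ℝ ↥A ∧ ∀ a : ↥A, (a : Fin d → ℝ) ∉ F → z a = 0}

/-! The renormalised restriction `π_ℱ` to the coordinates in `ℱ` commutes with the torus
action, maps `X_𝒜` into `X_ℱ`, and moves a point `z` of the simplex by `2 (1 - s)`, where `s`
is the mass of `z` on `ℱ`. A point `z ∈ w_i X_𝒜` within `δ` of `y ∈ ▵^ℱ` has mass `s > 1 - δ`
on `ℱ`, so `π_ℱ z ∈ w_i X_ℱ` lies within `3δ` of `y`. As `w_i X_ℱ → w X_ℱ` and `w X_ℱ` is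
compact, `y ∈ w X_ℱ`. -/

section

variable {d : ℕ} {A : Finset (Fin d → ℝ)}

lemma l1dist_triangle (x y z : ↥A → ℝ) :
    l1dist d A x z ≤ l1dist d A x y + l1dist d A y z := by
  rw [l1dist, l1dist, l1dist, ← Finset.sum_add_distrib]
  exact Finset.sum_le_sum fun a _ => abs_sub_le _ _ _

lemma dist_le_l1dist (y z : ↥A → ℝ) : dist y z ≤ l1dist d A y z :=
  (dist_pi_le_iff (Finset.sum_nonneg fun _ _ => abs_nonneg _)).2 fun a =>
    (Real.dist_eq _ _).trans_le <| Finset.single_le_sum (f := fun b => |y b - z b|)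
      (fun _ _ => abs_nonneg _) (Finset.mem_univ a)

lemma mem_of_hausdorffTendsto {X : ℕ → Set (↥A → ℝ)} {Y : Set (↥A → ℝ)} {y : ↥A → ℝ}
    (hXY : HausdorffTendsto d A X Y) (hY : IsClosed Y)
    (hy : ∀ ε > (0 : ℝ), {i | ∃ z ∈ X i, l1dist d A y z < ε}.Infinite) : y ∈ Y := by
  refine hY.closure_subset (Metric.mem_closure_iff.2 fun ε hε => ?_)
  obtain ⟨N, hN⟩ := eventually_atTop.1 (hXY (ε / 2) (half_pos hε))
  obtain ⟨i, ⟨z, hz, hyz⟩, hNi⟩ := (hy (ε / 2) (half_pos hε)).exists_gt N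
  obtain ⟨y', hy', hzy'⟩ := (hN i hNi.le).1 z hz
  refine ⟨y', hy', ?_⟩
  calc dist y y' ≤ l1dist d A y y' := dist_le_l1dist y y'
    _ ≤ l1dist d A y z + l1dist d A z y' := l1dist_triangle y z y'
    _ < ε := by linarith

lemma simplexNormalize_eq_inv_mul (u : ↥A → ℝ) :
    simplexNormalize d A u = fun a => (∑ b, u b)⁻¹ * u a := by
  funext a
  exact div_eq_inv_mul _ _

lemma simplexNormalize_const_mul (u : ↥A → ℝ) {c : ℝ} (hc : c ≠ 0) :
    simplexNormalize d A (fun a => c * u a) = simplexNormalize d A u := by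
  funext a
  simp only [simplexNormalize, ← Finset.mul_sum]
  exact mul_div_mul_left _ _ hc

lemma simplexNormalize_mem_stdSimplex {u : ↥A → ℝ} (hu : ∀ a, 0 ≤ u a)
    (hs : 0 < ∑ a, u a) : simplexNormalize d A u ∈ stdSimplex ℝ ↥A :=
  ⟨fun a => div_nonneg (hu a) hs.le, by
    simp only [simplexNormalize, ← Finset.sum_div, div_self hs.ne']⟩

lemma continuousAt_simplexNormalize {u : ↥A → ℝ} (hu : ∑ a, u a ≠ 0) :
    ContinuousAt (simplexNormalize d A) u :=
  continuousAt_pi.2 fun a => (continuous_apply a).continuousAt.div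
    (continuous_finsetSum _ fun b _ => continuous_apply b).continuousAt hu

lemma sum_mul_pos_of_mem_stdSimplex {w z : ↥A → ℝ} (hw : ∀ a, 0 < w a)
    (hz : z ∈ stdSimplex ℝ ↥A) : 0 < ∑ a, w a * z a := by
  obtain ⟨a, -, ha⟩ := Finset.exists_ne_zero_of_sum_ne_zero (hz.2 ▸ one_ne_zero)
  exact Finset.sum_pos' (fun b _ => mul_nonneg (hw b).le (hz.1 b))
    ⟨a, Finset.mem_univ a, mul_pos (hw a) (lt_of_le_of_ne (hz.1 a) (Ne.symm ha))⟩

lemma torusAct_mem_stdSimplex {w z : ↥A → ℝ} (hw : ∀ a, 0 < w a)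
    (hz : z ∈ stdSimplex ℝ ↥A) : torusAct d A w z ∈ stdSimplex ℝ ↥A :=
  simplexNormalize_mem_stdSimplex (fun a => mul_nonneg (hw a).le (hz.1 a))
    (sum_mul_pos_of_mem_stdSimplex hw hz)

lemma continuousOn_torusAct {w : ↥A → ℝ} (hw : ∀ a, 0 < w a) :
    ContinuousOn (torusAct d A w) (stdSimplex ℝ ↥A) := fun _ hz =>
  ((continuousAt_simplexNormalize (sum_mul_pos_of_mem_stdSimplex hw hz).ne').comp
    (continuous_pi fun a => continuous_const.mul (continuous_apply a)).continuousAt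
    ).continuousWithinAt

lemma torusAct_simplexNormalize (w : ↥A → ℝ) {u : ↥A → ℝ} (hu : ∑ a, u a ≠ 0) :
    torusAct d A w (simplexNormalize d A u) = torusAct d A w u := by
  rw [torusAct, torusAct, simplexNormalize_eq_inv_mul u,
    ← simplexNormalize_const_mul (fun a => w a * u a) (inv_ne_zero hu)]
  congr 1
  funext a
  ring

lemma toricMonomial_pos {x : Fin d → ℝ} (hx : ∀ j, 0 < x j) (a : ↥A) :
    0 < toricMonomial d A x a :=
  Finset.prod_pos fun j _ => Real.rpow_pos_of_pos (hx j) _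

lemma toricVariety_subset_stdSimplex [Nonempty ↥A] :
    toricVariety d A ⊆ stdSimplex ℝ ↥A := by
  refine closure_minimal ?_ (isClosed_stdSimplex _ _)
  rintro _ ⟨x, hx, rfl⟩
  exact simplexNormalize_mem_stdSimplex (fun a => (toricMonomial_pos hx a).le)
    (Finset.sum_pos (fun a _ => toricMonomial_pos hx a) Finset.univ_nonempty)

noncomputable def faceRestrict (F : Finset (Fin d → ℝ)) (z : ↥A → ℝ) : ↥A → ℝ :=
  fun a => if (a : Fin d → ℝ) ∈ F then z a else 0

/-- The projection `π_ℱ`, with `▵^ℱ` viewed as the face of `▵^𝒜` it spans; it is `0` on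
`▵^{𝒜∖ℱ}`, where the renormalisation divides by `0`. -/
noncomputable def faceProj (F : Finset (Fin d → ℝ)) (z : ↥A → ℝ) : ↥A → ℝ :=
  simplexNormalize d A (faceRestrict F z)

section Face

variable {F : Finset (Fin d → ℝ)}

lemma faceRestrict_nonneg {z : ↥A → ℝ} (hz : ∀ a, 0 ≤ z a) (a : ↥A) :
    0 ≤ faceRestrict F z a := by
  unfold faceRestrict
  split_ifs
  exacts [hz a, le_rfl]

lemma faceRestrict_le {z : ↥A → ℝ} (hz : ∀ a, 0 ≤ z a) (a : ↥A) :
    faceRestrict F z a ≤ z a := by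
  unfold faceRestrict
  split_ifs
  exacts [le_rfl, hz a]

lemma faceRestrict_mul (c z : ↥A → ℝ) :
    faceRestrict F (fun a => c a * z a) = fun a => c a * faceRestrict F z a := by
  funext a
  unfold faceRestrict
  split_ifs <;> simp

lemma continuous_faceRestrict (F : Finset (Fin d → ℝ)) :
    Continuous (faceRestrict (A := A) F) :=
  continuous_pi fun a => by
    unfold faceRestrict
    split_ifs
    exacts [continuous_apply a, continuous_const]

lemma faceProj_simplexNormalize {u : ↥A → ℝ} (hu : ∑ a, u a ≠ 0) :
    faceProj F (simplexNormalize d A u) = faceProj F u := by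
  rw [faceProj, simplexNormalize_eq_inv_mul u, faceRestrict_mul,
    simplexNormalize_const_mul _ (inv_ne_zero hu), faceProj]

lemma faceProj_torusAct {w v : ↥A → ℝ} (hT : ∑ a, w a * v a ≠ 0)
    (hR : ∑ a, faceRestrict F v a ≠ 0) :
    faceProj F (torusAct d A w v) = torusAct d A w (faceProj F v) := by
  rw [torusAct, faceProj_simplexNormalize hT, faceProj, faceProj, torusAct_simplexNormalize w hR,
    faceRestrict_mul, torusAct]

lemma exists_mem_of_mem_simplexFace {y : ↥A → ℝ} (hy : y ∈ simplexFace d A F) :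
    ∃ a : ↥A, (a : Fin d → ℝ) ∈ F := by
  obtain ⟨a, -, ha⟩ := Finset.exists_ne_zero_of_sum_ne_zero (hy.1.2 ▸ one_ne_zero)
  exact ⟨a, by_contra fun h => ha (hy.2 a h)⟩

lemma toricSubVariety_subset_stdSimplex (hF : ∃ a : ↥A, (a : Fin d → ℝ) ∈ F) :
    toricSubVariety d A F ⊆ stdSimplex ℝ ↥A := by
  refine closure_minimal ?_ (isClosed_stdSimplex _ _)
  rintro _ ⟨x, hx, rfl⟩
  obtain ⟨a, ha⟩ := hF
  have hnonneg : ∀ b, 0 ≤ subMonomial d A F x b :=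
    faceRestrict_nonneg fun b => (toricMonomial_pos hx b).le
  have hpos : 0 < subMonomial d A F x a := by
    rw [subMonomial, if_pos ha]
    exact toricMonomial_pos hx a
  exact simplexNormalize_mem_stdSimplex hnonneg
    (Finset.sum_pos' (fun b _ => hnonneg b) ⟨a, Finset.mem_univ a, hpos⟩)

lemma faceProj_mem_toricSubVariety {v : ↥A → ℝ} (hv : v ∈ toricVariety d A)
    (hR : ∑ a, faceRestrict F v a ≠ 0) : faceProj F v ∈ toricSubVariety d A F := by
  have hcont : ContinuousAt (faceProj F) v :=
    (continuousAt_simplexNormalize hR).comp (continuous_faceRestrict F).continuousAt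
  refine closure_mono ?_ (mem_closure_image hcont hv)
  rintro _ ⟨_, ⟨x, hx, rfl⟩, rfl⟩
  obtain ⟨a, -⟩ := Finset.exists_ne_zero_of_sum_ne_zero hR
  have : Nonempty ↥A := ⟨a⟩
  exact ⟨x, hx, faceProj_simplexNormalize
    (Finset.sum_pos (fun b _ => toricMonomial_pos hx b) Finset.univ_nonempty).ne'⟩

lemma isCompact_image_torusAct_toricSubVariety {w : ↥A → ℝ} (hw : ∀ a, 0 < w a)
    (hF : ∃ a : ↥A, (a : Fin d → ℝ) ∈ F) :
    IsCompact (torusAct d A w '' toricSubVariety d A F) :=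
  ((isCompact_stdSimplex _ _).of_isClosed_subset isClosed_closure
    (toricSubVariety_subset_stdSimplex hF)).image_of_continuousOn
    ((continuousOn_torusAct hw).mono (toricSubVariety_subset_stdSimplex hF))

lemma l1dist_faceProj {z : ↥A → ℝ} (hz : z ∈ stdSimplex ℝ ↥A)
    (hs : 0 < ∑ a, faceRestrict F z a) :
    l1dist d A z (faceProj F z) = 2 * (1 - ∑ a, faceRestrict F z a) := by
  set s := ∑ a, faceRestrict F z a
  have hs1 : s ≤ 1 := hz.2 ▸ Finset.sum_le_sum fun a _ => faceRestrict_le hz.1 a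
  have hcoord : ∀ a, |z a - faceRestrict F z a / s| =
      (s⁻¹ - 1) * faceRestrict F z a + (z a - faceRestrict F z a) := by
    intro a
    unfold faceRestrict
    split_ifs
    · have hle : z a ≤ z a / s := (le_div_iff₀ hs).2 (mul_le_of_le_one_right (hz.1 a) hs1)
      rw [abs_of_nonpos (sub_nonpos.2 hle)]
      ring
    · rw [zero_div, sub_zero, abs_of_nonneg (hz.1 a)]
      ring
  simp only [l1dist, faceProj, simplexNormalize]
  rw [Finset.sum_congr rfl fun a _ => hcoord a,
    Finset.sum_add_distrib, ← Finset.mul_sum, Finset.sum_sub_distrib, hz.2]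
  field_simp
  ring

lemma one_sub_sum_faceRestrict_le_l1dist {y : ↥A → ℝ} (hy : y ∈ simplexFace d A F)
    (z : ↥A → ℝ) : 1 - ∑ a, faceRestrict F z a ≤ l1dist d A y z := by
  have hy1 : ∑ a, faceRestrict F y a = 1 := by
    rw [← hy.1.2]
    refine Finset.sum_congr rfl fun a _ => ?_
    unfold faceRestrict
    split_ifs with h
    exacts [rfl, (hy.2 a h).symm]
  rw [← hy1, ← Finset.sum_sub_distrib]
  refine Finset.sum_le_sum fun a _ => ?_
  unfold faceRestrict
  split_ifs
  exacts [le_abs_self _, by simp]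

lemma exists_mem_image_toricSubVariety_l1dist_lt {w v y : ↥A → ℝ} {δ : ℝ}
    (hw : ∀ a, 0 < w a) (hv : v ∈ toricVariety d A) (hy : y ∈ simplexFace d A F)
    (hδ : δ ≤ 1) (hyv : l1dist d A y (torusAct d A w v) < δ) :
    ∃ z ∈ torusAct d A w '' toricSubVariety d A F, l1dist d A y z < 3 * δ := by
  obtain ⟨a, -⟩ := exists_mem_of_mem_simplexFace hy
  have : Nonempty ↥A := ⟨a⟩
  have hvΔ := toricVariety_subset_stdSimplex hv
  set z := torusAct d A w v
  have hs : 1 - δ < ∑ a, faceRestrict F z a := by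
    linarith [one_sub_sum_faceRestrict_le_l1dist hy z]
  have hR : ∑ a, faceRestrict F v a ≠ 0 := by
    intro h0
    have hv0 := (Finset.sum_eq_zero_iff_of_nonneg fun a _ => faceRestrict_nonneg hvΔ.1 a).1 h0
    have hz0 : faceRestrict F z = fun a => ((∑ b, w b * v b)⁻¹ * w a) * faceRestrict F v a := by
      simp only [z, torusAct, simplexNormalize_eq_inv_mul, ← mul_assoc, faceRestrict_mul]
    simp only [hz0, hv0 _ (Finset.mem_univ _), mul_zero, Finset.sum_const_zero] at hs
    linarith
  refine ⟨faceProj F z, ⟨faceProj F v, faceProj_mem_toricSubVariety hv hR,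
    (faceProj_torusAct (sum_mul_pos_of_mem_stdSimplex hw hvΔ).ne' hR).symm⟩, ?_⟩
  calc l1dist d A y (faceProj F z) ≤ l1dist d A y z + l1dist d A z (faceProj F z) :=
        l1dist_triangle _ _ _
    _ = l1dist d A y z + 2 * (1 - ∑ a, faceRestrict F z a) := by
        rw [l1dist_faceProj (torusAct_mem_stdSimplex hw hvΔ) (by linarith)]
    _ < 3 * δ := by linarith

end Face

end

theorem accumulation_point_in_face_variety_general (d : ℕ) (A : Finset (Fin d → ℝ))
    (S : Finset (Finset (Fin d → ℝ)))
    (w : ℕ → ↥A → ℝ) (hw : ∀ i a, 0 < w i a)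
    (wlim : ↥A → ℝ) (hwlim : ∀ a, 0 < wlim a)
    (hfaceconv : ∀ F ∈ S, HausdorffTendsto d A
      (fun i => torusAct d A (w i) '' toricSubVariety d A F)
      (torusAct d A wlim '' toricSubVariety d A F))
    (F₀ : Finset (Fin d → ℝ)) (hF₀ : F₀ ∈ S)
    (y : ↥A → ℝ) (hyF : y ∈ simplexFace d A F₀)
    (hy : ∀ ε > (0 : ℝ),
      {i : ℕ | ∃ z ∈ torusAct d A (w i) '' toricVariety d A,
        l1dist d A y z < ε}.Infinite) :
    y ∈ torusAct d A wlim '' toricSubVariety d A F₀ ∧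
      y ∈ ⋃ F ∈ S, torusAct d A wlim '' toricSubVariety d A F := by
  have hyY : y ∈ torusAct d A wlim '' toricSubVariety d A F₀ := by
    have hY := isCompact_image_torusAct_toricSubVariety hwlim (exists_mem_of_mem_simplexFace hyF)
    refine mem_of_hausdorffTendsto (hfaceconv F₀ hF₀) hY.isClosed fun ε hε => ?_
    refine (hy (min (ε / 3) 1) (by positivity)).mono ?_
    rintro i ⟨_, ⟨v, hv, rfl⟩, hyv⟩
    obtain ⟨z, hz, hyz⟩ :=
      exists_mem_image_toricSubVariety_l1dist_lt (hw i) hv hyF (min_le_right _ _) hyv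
    exact ⟨z, hz, hyz.trans_le (by linarith [min_le_left (ε / 3) 1])⟩
  exact ⟨hyY, Set.mem_biUnion hF₀ hyY⟩

/-- If `X_{ℱ,w_i} → X_{ℱ,w}` for every face `ℱ` of the subdivision `𝒮` and
`y ∈ ▵^ℱ` is an accumulation point of the translated toric varieties `X_{𝒜,w_i}`,
then `y ∈ X_{ℱ,w} ⊆ X(𝒮,w)`. -/
theorem accumulation_point_in_face_variety (d : ℕ) (A : Finset (Fin d → ℝ))
    (S : Finset (Finset (Fin d → ℝ))) (hS : IsPolySubdiv d A S)
    (w : ℕ → ↥A → ℝ) (hw : ∀ i a, 0 < w i a)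
    (wlim : ↥A → ℝ) (hwlim : ∀ a, 0 < wlim a)
    (hfaceconv : ∀ F ∈ S, HausdorffTendsto d A
      (fun i => torusAct d A (w i) '' toricSubVariety d A F)
      (torusAct d A wlim '' toricSubVariety d A F))
    (F₀ : Finset (Fin d → ℝ)) (hF₀ : F₀ ∈ S)
    (y : ↥A → ℝ) (hyF : y ∈ simplexFace d A F₀)
    (hy : ∀ ε > (0 : ℝ),
      {i : ℕ | ∃ z ∈ torusAct d A (w i) '' toricVariety d A,
        l1dist d A y z < ε}.Infinite) :
    y ∈ torusAct d A wlim '' toricSubVariety d A F₀ ∧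
      y ∈ ⋃ F ∈ S, torusAct d A wlim '' toricSubVariety d A F :=
  accumulation_point_in_face_variety_general d A S w hw wlim hwlim hfaceconv F₀ hF₀ y hyF hy
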